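/- Let L be the operator sending a function f to the derivative of (sec·f), i.e. L(f)(x) = d/dx (sec(x)·f(x)). Then for every natural number m ≥ 0 and every real x with cos(x) ≠ 0, L^{2m+1}(tan)(x) = (2m+1)! · sec(x) · ∑_{k=0}^{m+1} C(2m+2, 2k) · tan(x)^{2m−2k+2} · (1 + tan(x)^2)^{m+k}. -/

import Mathlib

/-!
With `u = tan + sec` and `v = tan - sec` one has `u' = sec * u` and `v' = -sec * v`, hence
`(sec * u)' = sec * u ^ 2` and `(sec * v)' = sec * v ^ 2`. Therefore
`L (sec ^ n * u ^ (n + 1)) = (n + 1) * sec ^ (n + 1) * u ^ (n + 2)`, likewise for `v`, and since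
`tan = (u + v) / 2` this gives `L^[n] tan = n! / 2 * sec ^ n * (u ^ (n + 1) + v ^ (n + 1))`.
For `n = 2m + 1` the odd powers of `sec` cancel in the binomial expansion of
`(tan + sec) ^ (2m + 2) + (tan - sec) ^ (2m + 2)`, and `sec ^ 2 = 1 + tan ^ 2` turns the rest
into the stated sum.
-/

/-- sec(x) = 1/cos(x). -/
noncomputable def sec (x : ℝ) : ℝ := (Real.cos x)⁻¹

/-- The operator L sending f to the derivative of sec·f. -/
noncomputable def L (f : ℝ → ℝ) : ℝ → ℝ := deriv (fun x => sec x * f x)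

open Finset Real Topology

theorem Finset.sum_range_two_mul {M : Type*} [AddCommMonoid M] (f : ℕ → M) (n : ℕ) :
    ∑ i ∈ range (2 * n), f i = ∑ i ∈ range n, (f (2 * i) + f (2 * i + 1)) := by
  induction n with
  | zero => simp
  | succ n ih =>
    rw [mul_add, mul_one, sum_range_succ, sum_range_succ, sum_range_succ, ih, add_assoc]

theorem add_pow_add_sub_pow_two_mul {R : Type*} [CommRing R] (a b : R) (n : ℕ) :
    (a + b) ^ (2 * n) + (a - b) ^ (2 * n) =
      2 * ∑ k ∈ range (n + 1), (2 * n).choose (2 * k) * a ^ (2 * n - 2 * k) * b ^ (2 * k) := by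
  have expand : (a + b) ^ (2 * n) + (a - b) ^ (2 * n) =
      ∑ j ∈ range (2 * n + 1), (1 + (-1) ^ j) * (2 * n).choose j * a ^ (2 * n - j) * b ^ j := by
    rw [add_comm a, sub_eq_neg_add, add_pow, add_pow, ← sum_add_distrib]
    refine sum_congr rfl fun j _ => ?_
    rw [neg_pow]
    ring
  rw [expand, sum_range_succ, sum_range_two_mul, sum_range_succ, mul_add, mul_sum]
  congr 1
  · refine sum_congr rfl fun k _ => ?_
    simp only [pow_succ, pow_mul]
    ring
  · simp only [pow_mul, neg_one_sq, one_pow]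
    ring

theorem sec_sq_eq_one_add_tan_sq {x : ℝ} (hx : cos x ≠ 0) : sec x ^ 2 = 1 + tan x ^ 2 := by
  rw [sec, inv_pow, ← inv_one_add_tan_sq hx, inv_inv]

theorem hasDerivAt_sec {x : ℝ} (hx : cos x ≠ 0) : HasDerivAt sec (sec x * tan x) x := by
  have h : HasDerivAt sec _ x := (hasDerivAt_cos x).inv hx
  convert h using 1
  rw [sec, tan_eq_sin_div_cos]
  field_simp

theorem hasDerivAt_tan_eq_sec_sq {x : ℝ} (hx : cos x ≠ 0) : HasDerivAt tan (sec x ^ 2) x := by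
  convert hasDerivAt_tan hx using 1
  rw [sec, inv_pow, one_div]

theorem hasDerivAt_sec_mul_tan_add_mul_sec_pow {c : ℝ} (hc : c ^ 2 = 1) (n : ℕ) {x : ℝ}
    (hx : cos x ≠ 0) :
    HasDerivAt (fun y => (sec y * (tan y + c * sec y)) ^ (n + 1))
      ((n + 1) * sec x ^ (n + 1) * (tan x + c * sec x) ^ (n + 2)) x := by
  have hg : HasDerivAt (fun y => sec y * (tan y + c * sec y)) _ x :=
    (hasDerivAt_sec hx).mul
      ((hasDerivAt_tan_eq_sec_sq hx).add ((hasDerivAt_sec hx).const_mul c))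
  refine (hg.fun_pow (n + 1)).congr_deriv ?_
  push_cast
  rw [mul_pow]
  linear_combination -(n + 1 : ℝ) * sec x ^ (n + 3) * (tan x + c * sec x) ^ n * hc

theorem iterate_L_tan (n : ℕ) {x : ℝ} (hx : cos x ≠ 0) :
    L^[n] tan x =
      n.factorial / 2 * sec x ^ n * ((tan x + sec x) ^ (n + 1) + (tan x - sec x) ^ (n + 1)) := by
  induction n generalizing x with
  | zero =>
    simp only [Function.iterate_zero_apply, Nat.factorial_zero, Nat.cast_one, pow_zero, zero_add,
      pow_one]
    ring
  | succ n ih =>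
    have near : (fun y => sec y * L^[n] tan y) =ᶠ[𝓝 x] fun y => n.factorial / 2 *
        ((sec y * (tan y + 1 * sec y)) ^ (n + 1) + (sec y * (tan y + -1 * sec y)) ^ (n + 1)) := by
      filter_upwards [(isOpen_ne_fun continuous_cos continuous_const).mem_nhds hx] with y hy
      rw [ih hy, mul_pow, mul_pow, one_mul, neg_one_mul]
      ring
    have hderiv := ((hasDerivAt_sec_mul_tan_add_mul_sec_pow (one_pow 2) n hx).add
      (hasDerivAt_sec_mul_tan_add_mul_sec_pow (c := -1) (by norm_num) n hx)).const_mul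
      ((n.factorial : ℝ) / 2)
    rw [Function.iterate_succ_apply', L, (hderiv.congr_of_eventuallyEq near).deriv,
      Nat.factorial_succ]
    push_cast
    ring

theorem iterate_L_tan_odd (m : ℕ) (x : ℝ) (hx : Real.cos x ≠ 0) :
    L^[2 * m + 1] Real.tan x =
      ((2 * m + 1).factorial : ℝ) * sec x *
        ∑ k ∈ Finset.range (m + 2),
          ((2 * m + 2).choose (2 * k)) *
            Real.tan x ^ (2 * m + 2 - 2 * k) * (1 + Real.tan x ^ 2) ^ (m + k) := by
  have hsec : sec x ^ (2 * m + 1) = sec x * (1 + tan x ^ 2) ^ m := by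
    rw [pow_succ', pow_mul, sec_sq_eq_one_add_tan_sq hx]
  rw [iterate_L_tan _ hx, hsec, show 2 * m + 1 + 1 = 2 * (m + 1) by ring,
    add_pow_add_sub_pow_two_mul, mul_sum, mul_sum, mul_sum]
  refine sum_congr rfl fun k _ => ?_
  rw [pow_mul, sec_sq_eq_one_add_tan_sq hx, pow_add]
  ring
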